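/- arXiv:2202.00891 — 3 statements merged into one kernel-verified Lean document; each statement's English description precedes it below -/
import Mathlib

section
/- Let f : ℕ → Set ℝ be a sequence of nonempty subsets of the real numbers which is a nondeterministic fast Cauchy sequence, i.e. for all n, m ∈ ℕ, all x ∈ f n and all y ∈ f m one has |x − y| ≤ 2^(−(n+m)). Then there exists a real number x such that for every n ∈ ℕ and every y ∈ f n, |x − y| ≤ 2^(−n). -/
open Filter Topology

/-- Choosing a point in each set gives an ordinary Cauchy sequence; its limit works for every
choice, because each `f n` stays within `δ n` of the tail of the chosen sequence. -/
theorem exists_forall_dist_le_of_le_tendsto_zero {α : Type*} [PseudoMetricSpace α]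
    [CompleteSpace α] (f : ℕ → Set α) (hne : ∀ n, (f n).Nonempty) (δ : ℕ → ℝ)
    (hδ : ∀ n m, n ≤ m → ∀ x ∈ f n, ∀ y ∈ f m, dist x y ≤ δ n)
    (hδ₀ : Tendsto δ atTop (𝓝 0)) :
    ∃ x, ∀ n, ∀ y ∈ f n, dist x y ≤ δ n := by
  choose g hg using hne
  have hg_cauchy : CauchySeq g :=
    cauchySeq_of_le_tendsto_0' δ (fun n m hnm => hδ n m hnm _ (hg n) _ (hg m)) hδ₀
  obtain ⟨x, hx⟩ := cauchySeq_tendsto_of_complete hg_cauchy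
  refine ⟨x, fun n y hy => ?_⟩
  have hg_near : ∀ᶠ m in atTop, g m ∈ Metric.closedBall y (δ n) :=
    eventually_atTop.2 ⟨n, fun m hnm => (dist_comm _ _).trans_le (hδ n m hnm y hy _ (hg m))⟩
  exact Metric.isClosed_closedBall.mem_of_tendsto hx hg_near

theorem tendsto_two_zpow_neg_atTop_nhds_zero :
    Tendsto (fun n : ℕ => (2:ℝ) ^ (-(n : ℤ))) atTop (𝓝 0) := by
  simp only [zpow_neg, zpow_natCast]
  exact tendsto_inv_atTop_zero.comp (tendsto_pow_atTop_atTop_of_one_lt one_lt_two)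

theorem nondet_fast_cauchy_has_limit
    (f : ℕ → Set ℝ) (hne : ∀ n, (f n).Nonempty)
    (hcauchy : ∀ n m : ℕ, ∀ x ∈ f n, ∀ y ∈ f m, |x - y| ≤ (2:ℝ) ^ (-(n + m : ℤ))) :
    ∃ x : ℝ, ∀ n : ℕ, ∀ y ∈ f n, |x - y| ≤ (2:ℝ) ^ (-(n : ℤ)) := by
  have hδ : ∀ n m, n ≤ m → ∀ x ∈ f n, ∀ y ∈ f m, dist x y ≤ (2:ℝ) ^ (-(n : ℤ)) :=
    fun n m _ x hx y hy => (hcauchy n m x hx y hy).trans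
      (zpow_le_zpow_right₀ one_le_two (by omega))
  simpa only [Real.dist_eq] using
    exists_forall_dist_le_of_le_tendsto_zero f hne _ hδ tendsto_two_zpow_neg_atTop_nhds_zero
end

section
/- Let f : ℝ → ℝ be continuous, let a < b be reals with f a < 0 and f b > 0, and assume there is exactly one z with a < z < b and f z = 0. Then f ((2a + b)/3) < 0 or f ((a + 2b)/3) > 0. -/
open Set

section IntermediateValue

variable {α δ : Type*} [ConditionallyCompleteLinearOrder α] [TopologicalSpace α] [OrderTopology α]
  [DenselyOrdered α] [LinearOrder δ] [TopologicalSpace δ] [OrderClosedTopology δ]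

/-- Otherwise the intermediate value theorem gives a crossing of `y` in `(a, c]` and another one
in `[d, b)`, and these are distinct since `c < d`. -/
theorem lt_or_lt_of_subsingleton_preimage_Ioo {f : α → δ} {a b c d : α} {y : δ}
    (hf : ContinuousOn f (Icc a b)) (hfa : f a < y) (hfb : y < f b)
    (hac : a ≤ c) (hcd : c < d) (hdb : d ≤ b)
    (hsub : {z ∈ Ioo a b | f z = y}.Subsingleton) :
    f c < y ∨ y < f d := by
  by_contra! h
  obtain ⟨z₁, ⟨haz₁, hz₁c⟩, hfz₁⟩ :=
    intermediate_value_Ioc hac (hf.mono (Icc_subset_Icc_right (hcd.le.trans hdb))) ⟨hfa, h.1⟩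
  obtain ⟨z₂, ⟨hdz₂, hz₂b⟩, hfz₂⟩ :=
    intermediate_value_Ico hdb (hf.mono (Icc_subset_Icc_left (hac.trans hcd.le))) ⟨h.2, hfb⟩
  have hz₁z₂ : z₁ < z₂ := hz₁c.trans_lt (hcd.trans_le hdz₂)
  exact hz₁z₂.ne <| hsub ⟨⟨haz₁, hz₁z₂.trans hz₂b⟩, hfz₁⟩ ⟨⟨haz₁.trans hz₁z₂, hz₂b⟩, hfz₂⟩

end IntermediateValue

theorem trisection_step
    (f : ℝ → ℝ) (hf : Continuous f)
    (a b : ℝ) (hab : a < b) (hfa : f a < 0) (hfb : f b > 0)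
    (huniq : ∃! z : ℝ, a < z ∧ z < b ∧ f z = 0) :
    f ((2 * a + b) / 3) < 0 ∨ f ((a + 2 * b) / 3) > 0 := by
  have hsub : {z ∈ Ioo a b | f z = 0}.Subsingleton := fun x hx y hy =>
    huniq.unique ⟨hx.1.1, hx.1.2, hx.2⟩ ⟨hy.1.1, hy.1.2, hy.2⟩
  exact lt_or_lt_of_subsingleton_preimage_Ioo hf.continuousOn hfa hfb
    (by linarith) (by linarith) (by linarith) hsub
end

section
/- Define heron : ℝ → ℕ → ℝ by heron x 0 = 1 and heron x (n+1) = (heron x n + x / heron x n) / 2. Then for every real x with 1/4 ≤ x ≤ 2 and every n ∈ ℕ, |heron x n − √x| ≤ 2^(−2^n). -/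
noncomputable def heron (x : ℝ) : ℕ → ℝ
  | 0 => 1
  | n + 1 => (heron x n + x / heron x n) / 2

/-!
With `aₙ = heron x n`, Newton's step squares the error up to the factor `1 / (2 aₙ)`:
`aₙ₊₁ - √x = (aₙ - √x)² / (2 aₙ)`. Hence every iterate after the first lies above `√x`,
so for `x ≥ 1/4` all iterates are at least `1/2` and the error is at most squared at each step.
On `[1/4, 2]` the initial error `|1 - √x|` is at most `1/2`, so the `n`-th error is at most
`(1/2)^(2^n)`.
-/

theorem abs_le_pow_two_pow_of_abs_succ_le_sq {e : ℕ → ℝ} {c : ℝ} (h₀ : |e 0| ≤ c)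
    (hsucc : ∀ n, |e (n + 1)| ≤ e n ^ 2) (n : ℕ) : |e n| ≤ c ^ 2 ^ n := by
  induction n with
  | zero => simpa using h₀
  | succ n ih =>
    calc |e (n + 1)| ≤ |e n| ^ 2 := (hsucc n).trans_eq (sq_abs _).symm
      _ ≤ (c ^ 2 ^ n) ^ 2 := pow_le_pow_left₀ (abs_nonneg _) ih 2
      _ = c ^ 2 ^ (n + 1) := by rw [← pow_mul, pow_succ]

theorem newton_sqrt_step_sub {a s : ℝ} (ha : a ≠ 0) :
    (a + s ^ 2 / a) / 2 - s = (a - s) ^ 2 / (2 * a) := by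
  field_simp
  ring

namespace heron

variable {x : ℝ}

theorem pos (hx : 0 < x) : ∀ n, 0 < heron x n
  | 0 => one_pos
  | n + 1 => by
    have := pos hx n
    simp only [heron]
    positivity

theorem succ_sub_sqrt (hx : 0 < x) (n : ℕ) :
    heron x (n + 1) - √x = (heron x n - √x) ^ 2 / (2 * heron x n) := by
  rw [← newton_sqrt_step_sub (pos hx n).ne', Real.sq_sqrt hx.le, heron]

theorem sqrt_le_succ (hx : 0 < x) (n : ℕ) : √x ≤ heron x (n + 1) := by
  have h := succ_sub_sqrt hx n
  have : 0 ≤ (heron x n - √x) ^ 2 / (2 * heron x n) := by have := pos hx n; positivity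
  linarith

theorem min_one_sqrt_le (hx : 0 < x) : ∀ n, min 1 √x ≤ heron x n
  | 0 => min_le_left _ _
  | n + 1 => (min_le_right _ _).trans (sqrt_le_succ hx n)

theorem half_le (hx : 1 / 4 ≤ x) (n : ℕ) : 1 / 2 ≤ heron x n := by
  have hsqrt : 1 / 2 ≤ √x := Real.le_sqrt_of_sq_le (by linarith)
  exact (le_min (by norm_num) hsqrt).trans (min_one_sqrt_le (by linarith) n)

theorem abs_succ_sub_sqrt_le (hx : 1 / 4 ≤ x) (n : ℕ) :
    |heron x (n + 1) - √x| ≤ (heron x n - √x) ^ 2 := by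
  have hx₀ : 0 < x := by linarith
  have hden : 1 ≤ 2 * heron x n := by linarith [half_le hx n]
  rw [succ_sub_sqrt hx₀, abs_of_nonneg (by positivity)]
  exact div_le_self (sq_nonneg _) hden

end heron

theorem abs_one_sub_sqrt_le_half {x : ℝ} (hx₁ : 1 / 4 ≤ x) (hx₂ : x ≤ 2) : |1 - √x| ≤ 1 / 2 := by
  have hlow : 1 / 2 ≤ √x := Real.le_sqrt_of_sq_le (by linarith)
  have hup : √x ≤ 3 / 2 := Real.sqrt_le_iff.mpr ⟨by norm_num, by linarith⟩
  rw [abs_le]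
  constructor <;> linarith

theorem heron_quadratic_convergence
    (x : ℝ) (hx1 : 1 / 4 ≤ x) (hx2 : x ≤ 2) (n : ℕ) :
    |heron x n - Real.sqrt x| ≤ (2:ℝ) ^ (-(2 ^ n : ℤ)) := by
  calc |heron x n - √x| ≤ (1 / 2) ^ 2 ^ n :=
        abs_le_pow_two_pow_of_abs_succ_le_sq (e := fun k ↦ heron x k - √x)
          (abs_one_sub_sqrt_le_half hx1 hx2)
          (heron.abs_succ_sub_sqrt_le hx1) n
    _ = (2:ℝ) ^ (-(2 ^ n : ℤ)) := by rw [zpow_neg, one_div, inv_pow]; norm_cast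
end
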